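/- arXiv:2009.10805 — 2 statements merged into one kernel-verified Lean document; each statement's English description precedes it below -/
import Mathlib

section
/- Let F be a free abelian group with free basis B ⊆ F, let G be an abelian group, and let c be a normalized symmetric 2-cocycle on F with values in G; extend c to tuples recursively as above, and for x ∈ F and k ≥ 1 write x^{(k)} for the k-tuple (x,…,x). Define ρ : F → G by setting, for x = (k_0 b_0 + ⋯ + k_ℓ b_ℓ) − (m_0 d_0 + ⋯ + m_s d_s) with k_0,…,k_ℓ, m_0,…,m_s strictly positive integers and b_0,…,b_ℓ, d_0,…,d_s pairwise distinct elements of B, ρ(x) := c(b_0^{(k_0)},…,b_ℓ^{(k_ℓ)}, −d_0^{(m_0)},…,−d_s^{(m_s)}) − Σ_{i=0}^{s} m_i · c(d_i, −d_i). Then for every x, x′ ∈ F and every e ∈ B: (1) ρ(x) + c(x,e) = ρ(x+e) and ρ(x) + c(x,−e) − c(e,−e) = ρ(x−e); (2) ρ(x+x′) = c(x,x′) + ρ(x) + ρ(x′). -/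
/-!
Statement 1: the explicit function ρ on a free abelian group built from a normalized
symmetric 2-cocycle (Lemma `ext-free` of Lupini, "Definable Eilenberg–Mac Lane Universal
Coefficient Theorems").

Tuples are represented by lists; `cext` is the extension of the cocycle to tuples,
with `cext c [x] = 0` and `cext c (l ++ [y]) = cext c l + c (l.sum) y`.
The tuple `(b₀^{(k₀)}, …, b_ℓ^{(k_ℓ)}, −d₀^{(m₀)}, …, −d_s^{(m_s)})` is represented by
the list of replicated entries.
-/

/-- Auxiliary recursion with accumulator. -/
def cextAux {A G : Type*} [AddCommGroup A] [AddCommGroup G] (c : A → A → G) : A → List A → G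
  | _, [] => 0
  | s, x :: xs => c s x + cextAux c (s + x) xs

/-- The extension of a 2-cocycle `c` to tuples. -/
def cext {A G : Type*} [AddCommGroup A] [AddCommGroup G] (c : A → A → G) : List A → G
  | [] => 0
  | x :: xs => cextAux c x xs

/-!
The cocycle identity makes the extension `cext c` invariant under permutations of the tuple,
so appending one more copy of `e` to the tuple that defines `ρ x` adds `c x e`. When `e` occurs
in `x` with a negative coefficient, one instead removes a copy of `-e`; the correction term
`m • c d (-d)` and the identity `c x e + c (x + e) (-e) = c e (-e)` turn this into the same
statement. Additivity up to `c` then follows by induction on `x'` over the generators, each step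
being an instance of `c x a + c (x + a) b = c x (a + b) + c a b`.
-/

open List

section Cocycle

variable {F G : Type*} [AddCommGroup F] [AddCommGroup G]

section Extension

variable (c : F → F → G)

lemma cextAux_append_singleton (s : F) (l : List F) (y : F) :
    cextAux c s (l ++ [y]) = cextAux c s l + c (s + l.sum) y := by
  induction l generalizing s with
  | nil => simp [cextAux]
  | cons x l ih => simp only [cons_append, cextAux, ih, sum_cons, add_assoc]

lemma cextAux_perm (hcoc : ∀ x y z, c x y + c (x + y) z = c x z + c (x + z) y)
    {l l' : List F} (h : l.Perm l') (s : F) : cextAux c s l = cextAux c s l' := by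
  induction h generalizing s with
  | nil => rfl
  | cons x _ ih => simp only [cextAux, ih]
  | swap x y l =>
    simp only [cextAux]
    rw [← add_assoc, hcoc, add_right_comm s y x, add_assoc]
  | trans _ _ ih₁ ih₂ => exact (ih₁ s).trans (ih₂ s)

lemma cext_eq_cextAux_zero (h0 : ∀ x, c 0 x = 0) (l : List F) : cext c l = cextAux c 0 l := by
  cases l with
  | nil => rfl
  | cons x l => simp [cext, cextAux, h0]

end Extension

structure IsNormalizedSymmCocycle (c : F → F → G) : Prop where
  map_zero_right : ∀ x, c x 0 = 0
  comm : ∀ x y, c x y = c y x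
  cocycle : ∀ x y z, c x y + c (x + y) z = c x z + c (x + z) y

namespace IsNormalizedSymmCocycle

variable {c : F → F → G}

lemma map_zero_left (hc : IsNormalizedSymmCocycle c) (x : F) : c 0 x = 0 := by
  rw [hc.comm, hc.map_zero_right]

lemma assoc (hc : IsNormalizedSymmCocycle c) (x a b : F) :
    c x a + c (x + a) b = c x (a + b) + c a b := by
  have h := hc.cocycle a b x
  rw [hc.comm (a + b), hc.comm a x, add_comm a x] at h
  rw [← h, add_comm]

lemma add_neg (hc : IsNormalizedSymmCocycle c) (x e : F) :
    c x e + c (x + e) (-e) = c e (-e) := by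
  rw [hc.assoc, add_neg_cancel, hc.map_zero_right, zero_add]

lemma map_add_eq_iff (hc : IsNormalizedSymmCocycle c) (ρ : F → G) (x e : F) :
    ρ (x + e) = ρ x + c x e ↔ ρ x = ρ (x + e) + c (x + e) (-e) - c e (-e) := by
  rw [← hc.add_neg x e]
  constructor <;> intro h <;> rw [h] <;> abel

lemma map_sub_eq (hc : IsNormalizedSymmCocycle c) {ρ : F → G} {e : F}
    (hstep : ∀ x, ρ (x + e) = ρ x + c x e) (x : F) :
    ρ (x - e) = ρ x + c x (-e) - c e (-e) := by
  simpa using (hc.map_add_eq_iff ρ (x - e) e).1 (hstep (x - e))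

lemma map_add_of_map_add_mem (hc : IsNormalizedSymmCocycle c) {B : Set F}
    (hspan : Submodule.span ℤ B = ⊤) {ρ : F → G} (h0 : ρ 0 = 0)
    (hstep : ∀ x, ∀ e ∈ B, ρ (x + e) = ρ x + c x e) (x a : F) :
    ρ (x + a) = c x a + ρ x + ρ a := by
  have ha : a ∈ AddSubgroup.closure B := by
    rw [← Submodule.span_int_eq_addSubgroupClosure, hspan]
    trivial
  induction ha using AddSubgroup.closure_induction_left generalizing x with
  | zero => simp [h0, hc.map_zero_right]
  | add_left e he a _ ih =>
    rw [add_comm e a, ← add_assoc, hstep _ e he, hstep a e he, ih]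
    calc _ = (c x a + c (x + a) e) + ρ x + ρ a := by abel
      _ = _ := by rw [hc.assoc]; abel
  | neg_add_cancel e he a _ ih =>
    have hsub := fun w => hc.map_sub_eq (fun x => hstep x e he) w
    rw [neg_add_eq_sub, ← add_sub_assoc, hsub, hsub, ih]
    calc _ = (c x a + c (x + a) (-e)) + ρ x + ρ a - c e (-e) := by abel
      _ = _ := by rw [hc.assoc, ← sub_eq_add_neg]; abel

lemma cext_append_cons (hc : IsNormalizedSymmCocycle c) (l₁ l₂ : List F) (y : F) :
    cext c (l₁ ++ y :: l₂) = cext c (l₁ ++ l₂) + c (l₁ ++ l₂).sum y := by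
  simp only [cext_eq_cextAux_zero c hc.map_zero_left]
  rw [cextAux_perm c hc.cocycle (perm_middle.trans (perm_append_singleton y _).symm),
    cextAux_append_singleton, zero_add]

lemma cext_append_singleton (hc : IsNormalizedSymmCocycle c) (l : List F) (y : F) :
    cext c (l ++ [y]) = cext c l + c l.sum y := by
  simpa using hc.cext_append_cons l [] y

end IsNormalizedSymmCocycle

end Cocycle

section Admissible

variable {F : Type*}

def IsAdmissible (B : Set F) (Q : List (F × ℕ)) : Prop :=
  (∀ p ∈ Q, p.1 ∈ B ∧ 0 < p.2) ∧ (Q.map Prod.fst).Nodup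

namespace IsAdmissible

variable {B B' : Set F} {Q Q' : List (F × ℕ)} {e : F}

lemma mono (h : IsAdmissible B Q) (hB : B ⊆ B') : IsAdmissible B' Q :=
  ⟨fun p hp => ⟨hB (h.1 p hp).1, (h.1 p hp).2⟩, h.2⟩

lemma perm (h : IsAdmissible B Q) (hQ : Q.Perm Q') : IsAdmissible B Q' :=
  ⟨fun p hp => h.1 p (hQ.mem_iff.2 hp), (hQ.map _).nodup_iff.1 h.2⟩

lemma cons (h : IsAdmissible B Q) {a : F} (ha : a ∉ B) {k : ℕ} (hk : 0 < k) :
    IsAdmissible (insert a B) ((a, k) :: Q) := by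
  refine ⟨?_, ?_⟩
  · simp only [mem_cons, forall_eq_or_imp, Set.mem_insert_iff, true_or, true_and]
    exact ⟨hk, fun p hp => ⟨Or.inr (h.1 p hp).1, (h.1 p hp).2⟩⟩
  · refine nodup_cons.2 ⟨fun hmem => ?_, h.2⟩
    obtain ⟨p, hp, rfl⟩ := List.mem_map.1 hmem
    exact ha (h.1 p hp).1

lemma append_singleton (h : IsAdmissible (B \ {e}) Q) (he : e ∈ B) {k : ℕ} (hk : 0 < k) :
    IsAdmissible B (Q ++ [(e, k)]) := by
  have := (h.cons (fun h' => h'.2 rfl) hk).perm (perm_append_singleton _ _).symm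
  rwa [Set.insert_sdiff_singleton, Set.insert_eq_of_mem he] at this

end IsAdmissible

end Admissible

section Expansion

variable {F G : Type*} [AddCommGroup F] [AddCommGroup G]

def smulSum (P : List (F × ℕ)) : F := (P.map fun p => p.2 • p.1).sum

def replicates (P : List (F × ℕ)) : List F := (P.map fun p => replicate p.2 p.1).flatten

def replicatesNeg (N : List (F × ℕ)) : List F := (N.map fun p => replicate p.2 (-p.1)).flatten

def negCorrection (c : F → F → G) (N : List (F × ℕ)) : G :=
  (N.map fun p => p.2 • c p.1 (-p.1)).sum

lemma sum_replicates (P : List (F × ℕ)) : (replicates P).sum = smulSum P := by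
  simp [replicates, smulSum, sum_flatten, Function.comp_def]

lemma sum_replicatesNeg (N : List (F × ℕ)) : (replicatesNeg N).sum = -smulSum N := by
  induction N with
  | nil => simp [replicatesNeg, smulSum]
  | cons p N ih =>
    simp only [replicatesNeg, smulSum, map_cons, flatten_cons, sum_append, sum_cons] at ih ⊢
    rw [ih, sum_replicate, smul_neg, neg_add]

lemma exists_isAdmissible_finset_sum_eq [DecidableEq F] (T : Finset F) (f : F → ℤ) :
    ∃ P N : List (F × ℕ), IsAdmissible (T : Set F) (P ++ N) ∧
      ∑ b ∈ T, f b • b = smulSum P - smulSum N := by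
  induction T using Finset.induction_on with
  | empty => exact ⟨[], [], ⟨by simp, by simp⟩, by simp [smulSum]⟩
  | insert a T ha ih =>
    obtain ⟨P, N, hadm, hsum⟩ := ih
    rw [Finset.sum_insert ha, hsum, Finset.coe_insert]
    rcases lt_trichotomy (f a) 0 with hneg | hzero | hpos
    · refine ⟨P, (a, (-f a).toNat) :: N, (hadm.cons ha (by omega)).perm perm_middle.symm, ?_⟩
      have hk : (((-f a).toNat : ℕ) : ℤ) = -f a := Int.toNat_of_nonneg (by omega)
      simp only [smulSum, map_cons, sum_cons]
      rw [← natCast_zsmul, hk, neg_smul]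
      abel
    · exact ⟨P, N, hadm.mono (Set.subset_insert _ _), by rw [hzero, zero_smul, zero_add]⟩
    · refine ⟨(a, (f a).toNat) :: P, N, hadm.cons ha (by omega), ?_⟩
      have hk : (((f a).toNat : ℕ) : ℤ) = f a := Int.toNat_of_nonneg hpos.le
      simp only [smulSum, map_cons, sum_cons]
      rw [← natCast_zsmul, hk]
      abel

lemma exists_isAdmissible_add_zsmul {B : Set F} (hspan : Submodule.span ℤ B = ⊤) (x e : F) :
    ∃ (P N : List (F × ℕ)) (n : ℤ), IsAdmissible (B \ {e}) (P ++ N) ∧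
      x = smulSum P - smulSum N + n • e := by
  classical
  obtain ⟨f, hsupp, rfl⟩ := Submodule.mem_span_set.1 (hspan ▸ Submodule.mem_top : x ∈ _)
  obtain ⟨P, N, hadm, hsum⟩ := exists_isAdmissible_finset_sum_eq (f.support.erase e) f
  refine ⟨P, N, f e, hadm.mono ?_, ?_⟩
  · rw [Finset.coe_erase]
    exact Set.sdiff_subset_sdiff_left hsupp
  · rw [← hsum, Finsupp.sum]
    by_cases he : e ∈ f.support
    · rw [Finset.sum_erase_add _ _ he]
    · rw [Finsupp.notMem_support_iff.1 he, zero_smul, add_zero, Finset.erase_eq_of_notMem he]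

end Expansion

section Formula

variable {F G : Type*} [AddCommGroup F] [AddCommGroup G]

/-- `P` lists the pairs `(bᵢ, kᵢ)` and `N` the pairs `(dᵢ, mᵢ)` of the formula defining `ρ`. -/
def ExpansionFormula (B : Set F) (c : F → F → G) (ρ : F → G) : Prop :=
  ∀ P N : List (F × ℕ), IsAdmissible B (P ++ N) →
    ρ (smulSum P - smulSum N) = cext c (replicates P ++ replicatesNeg N) - negCorrection c N

namespace ExpansionFormula

variable {B : Set F} {c : F → F → G} {ρ : F → G} {P N : List (F × ℕ)} {e : F}

lemma map_zero (hρ : ExpansionFormula B c ρ) : ρ 0 = 0 := by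
  simpa [smulSum, replicates, replicatesNeg, cext, negCorrection] using
    hρ [] [] ⟨by simp, by simp⟩

lemma apply_add_nsmul (hρ : ExpansionFormula B c ρ) (hPN : IsAdmissible (B \ {e}) (P ++ N))
    (he : e ∈ B) (m : ℕ) :
    ρ (smulSum P - smulSum N + m • e) =
      cext c (replicates P ++ replicate m e ++ replicatesNeg N) - negCorrection c N := by
  cases m with
  | zero => simpa using hρ P N (hPN.mono Set.sdiff_subset)
  | succ m =>
    have hadm : IsAdmissible B (P ++ [(e, m + 1)] ++ N) :=
      (hPN.append_singleton he m.succ_pos).perm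
        (by simpa using (perm_append_singleton _ _).trans perm_middle.symm)
    simpa [smulSum, replicates, add_sub_right_comm] using hρ (P ++ [(e, m + 1)]) N hadm

lemma apply_sub_nsmul (hρ : ExpansionFormula B c ρ) (hPN : IsAdmissible (B \ {e}) (P ++ N))
    (he : e ∈ B) (m : ℕ) :
    ρ (smulSum P - smulSum N - m • e) =
      cext c (replicates P ++ replicatesNeg N ++ replicate m (-e)) - negCorrection c N
        - m • c e (-e) := by
  cases m with
  | zero => simpa using hρ P N (hPN.mono Set.sdiff_subset)
  | succ m =>
    have hadm : IsAdmissible B (P ++ (N ++ [(e, m + 1)])) := by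
      simpa using hPN.append_singleton he m.succ_pos
    simpa [smulSum, replicatesNeg, negCorrection, sub_add_eq_sub_sub] using
      hρ P (N ++ [(e, m + 1)]) hadm

lemma add_succ_nsmul (hρ : ExpansionFormula B c ρ) (hc : IsNormalizedSymmCocycle c)
    (hPN : IsAdmissible (B \ {e}) (P ++ N)) (he : e ∈ B) (m : ℕ) :
    ρ (smulSum P - smulSum N + (m + 1) • e) =
      ρ (smulSum P - smulSum N + m • e) + c (smulSum P - smulSum N + m • e) e := by
  have hlist : replicates P ++ replicate (m + 1) e ++ replicatesNeg N =
      (replicates P ++ replicate m e) ++ e :: replicatesNeg N := by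
    simp [replicate_succ']
  rw [hρ.apply_add_nsmul hPN he, hρ.apply_add_nsmul hPN he, hlist, hc.cext_append_cons,
    sum_append, sum_append, sum_replicates, sum_replicatesNeg, sum_replicate]
  abel_nf

lemma sub_succ_nsmul (hρ : ExpansionFormula B c ρ) (hc : IsNormalizedSymmCocycle c)
    (hPN : IsAdmissible (B \ {e}) (P ++ N)) (he : e ∈ B) (m : ℕ) :
    ρ (smulSum P - smulSum N - (m + 1) • e) =
      ρ (smulSum P - smulSum N - m • e) + c (smulSum P - smulSum N - m • e) (-e)
        - c e (-e) := by
  rw [hρ.apply_sub_nsmul hPN he, hρ.apply_sub_nsmul hPN he, replicate_succ', ← append_assoc,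
    hc.cext_append_singleton, sum_append, sum_append, sum_replicates, sum_replicatesNeg,
    sum_replicate, smul_neg, succ_nsmul]
  abel_nf

lemma map_add_of_mem (hρ : ExpansionFormula B c ρ) (hc : IsNormalizedSymmCocycle c)
    (hspan : Submodule.span ℤ B = ⊤) (he : e ∈ B) (x : F) : ρ (x + e) = ρ x + c x e := by
  obtain ⟨P, N, n, hPN, rfl⟩ := exists_isAdmissible_add_zsmul hspan x e
  rcases n with m | m
  · rw [Int.ofNat_eq_natCast, natCast_zsmul, add_assoc, ← succ_nsmul,
      hρ.add_succ_nsmul hc hPN he]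
  · have hx : smulSum P - smulSum N - (m + 1) • e + e = smulSum P - smulSum N - m • e := by
      rw [succ_nsmul]
      abel
    rw [negSucc_zsmul, ← sub_eq_add_neg, hc.map_add_eq_iff, hx]
    exact hρ.sub_succ_nsmul hc hPN he m

end ExpansionFormula

end Formula

theorem rho_of_cocycle_on_free_abelian_group_general
    {F G : Type*} [AddCommGroup F] [AddCommGroup G]
    (B : Set F)
    (hBspan : Submodule.span ℤ B = ⊤)
    (c : F → F → G)
    (hnorm : ∀ x : F, c x 0 = 0)
    (hsymm : ∀ x y : F, c x y = c y x)
    (hcoc : ∀ x y z : F, c x y + c (x + y) z = c x z + c (x + z) y)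
    (ρ : F → G)
    -- ρ is defined by the explicit formula: for
    -- x = (k₀ b₀ + ⋯ + k_ℓ b_ℓ) − (m₀ d₀ + ⋯ + m_s d_s), with strictly positive
    -- integer coefficients and pairwise distinct basis elements,
    -- ρ(x) = c(b₀^{(k₀)},…,b_ℓ^{(k_ℓ)},−d₀^{(m₀)},…,−d_s^{(m_s)}) − Σᵢ mᵢ · c(dᵢ, −dᵢ).
    (hρ : ∀ (x : F) (bs ds : List F) (ks ms : List ℕ),
      bs.length = ks.length → ds.length = ms.length →
      (∀ b ∈ bs, b ∈ B) → (∀ d ∈ ds, d ∈ B) →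
      (bs ++ ds).Nodup →
      (∀ k ∈ ks, 0 < k) → (∀ m ∈ ms, 0 < m) →
      x = ((bs.zip ks).map fun p => p.2 • p.1).sum
          - ((ds.zip ms).map fun p => p.2 • p.1).sum →
      ρ x = cext c
              (((bs.zip ks).map fun p => List.replicate p.2 p.1).flatten
                ++ ((ds.zip ms).map fun p => List.replicate p.2 (-p.1)).flatten)
            - ((ds.zip ms).map fun p => p.2 • c p.1 (-p.1)).sum) :
    (∀ (x : F) (e : F), e ∈ B →
      ρ x + c x e = ρ (x + e) ∧ ρ x + c x (-e) - c e (-e) = ρ (x - e)) ∧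
    (∀ x x' : F, ρ (x + x') = c x x' + ρ x + ρ x') := by
  have hc : IsNormalizedSymmCocycle c := ⟨hnorm, hsymm, hcoc⟩
  have hformula : ExpansionFormula B c ρ := by
    rintro P N ⟨hmem, hnd⟩
    have hzip : ∀ Q : List (F × ℕ), (Q.map Prod.fst).zip (Q.map Prod.snd) = Q :=
      fun Q => (zip_of_prod rfl rfl).symm
    simp only [forall_mem_append] at hmem
    have h := hρ (smulSum P - smulSum N) (P.map Prod.fst) (N.map Prod.fst) (P.map Prod.snd)
      (N.map Prod.snd) (by simp) (by simp) (forall_mem_map.2 fun p hp => (hmem.1 p hp).1)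
      (forall_mem_map.2 fun p hp => (hmem.2 p hp).1) (by simpa using hnd)
      (forall_mem_map.2 fun p hp => (hmem.1 p hp).2)
      (forall_mem_map.2 fun p hp => (hmem.2 p hp).2) (by rw [hzip, hzip]; rfl)
    simp only [hzip] at h
    exact h
  have hadd : ∀ x, ∀ e ∈ B, ρ (x + e) = ρ x + c x e :=
    fun x e he => hformula.map_add_of_mem hc hBspan he x
  refine ⟨fun x e he => ⟨(hadd x e he).symm, ?_⟩,
    hc.map_add_of_map_add_mem hBspan hformula.map_zero hadd⟩
  exact (hc.map_sub_eq (fun x => hadd x e he) x).symm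

theorem rho_of_cocycle_on_free_abelian_group
    {F G : Type*} [AddCommGroup F] [AddCommGroup G]
    (B : Set F)
    (hBindep : LinearIndependent ℤ ((↑) : B → F))
    (hBspan : Submodule.span ℤ B = ⊤)
    (c : F → F → G)
    (hnorm : ∀ x : F, c x 0 = 0)
    (hsymm : ∀ x y : F, c x y = c y x)
    (hcoc : ∀ x y z : F, c x y + c (x + y) z = c x z + c (x + z) y)
    (ρ : F → G)
    -- ρ is defined by the explicit formula: for
    -- x = (k₀ b₀ + ⋯ + k_ℓ b_ℓ) − (m₀ d₀ + ⋯ + m_s d_s), with strictly positive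
    -- integer coefficients and pairwise distinct basis elements,
    -- ρ(x) = c(b₀^{(k₀)},…,b_ℓ^{(k_ℓ)},−d₀^{(m₀)},…,−d_s^{(m_s)}) − Σᵢ mᵢ · c(dᵢ, −dᵢ).
    (hρ : ∀ (x : F) (bs ds : List F) (ks ms : List ℕ),
      bs.length = ks.length → ds.length = ms.length →
      (∀ b ∈ bs, b ∈ B) → (∀ d ∈ ds, d ∈ B) →
      (bs ++ ds).Nodup →
      (∀ k ∈ ks, 0 < k) → (∀ m ∈ ms, 0 < m) →
      x = ((bs.zip ks).map fun p => p.2 • p.1).sum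
          - ((ds.zip ms).map fun p => p.2 • p.1).sum →
      ρ x = cext c
              (((bs.zip ks).map fun p => List.replicate p.2 p.1).flatten
                ++ ((ds.zip ms).map fun p => List.replicate p.2 (-p.1)).flatten)
            - ((ds.zip ms).map fun p => p.2 • c p.1 (-p.1)).sum) :
    (∀ (x : F) (e : F), e ∈ B →
      ρ x + c x e = ρ (x + e) ∧ ρ x + c x (-e) - c e (-e) = ρ (x - e)) ∧
    (∀ x x' : F, ρ (x + x') = c x x' + ρ x + ρ x') :=
  rho_of_cocycle_on_free_abelian_group_general B hBspan c hnorm hsymm hcoc ρ hρ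
end

section
/- Let G be a Polish abelian group with the division closure property, A a cochain complex of countable free abelian groups, and A* its G-dual Polish chain complex. Then for every n ∈ ℤ the sequence 0 → Hom(B^{n+1}(A),G)/Hom(Z^{n+1}(A)|B^{n+1}(A),G) →(coIndex) H_n(A*) →(Index) Hom(H^n(A),G) → 0 is exact, where coIndex([f]) = [(−1)^n (f∘δ^n)] and Index([z])([a]) = z(a); the first group is isomorphic to Ext(H^{n+1}(A),G) realized as cocycles modulo coboundaries. Moreover the sequence splits, with a right inverse of Index induced by the continuous map φ ↦ φ∘p^n∘i† (for a group-theoretic retraction i† : A^n → Z^n(A) and quotient map p^n : Z^n(A) → H^n(A)) and a left inverse of coIndex induced by the continuous map z ↦ (−1)^n (z∘δ†) (for a group-theoretic section δ† : B^{n+1}(A) → A^n of δ^n). -/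
/-!
Subgroups of countable free abelian groups are free: for a submodule `P` of `ℕ →₀ ℤ`, choosing
in each degree `k` an element of `P` whose top coefficient generates the ideal of top
coefficients gives a triangular, hence independent, spanning family. So every `B^k(A)` and
`Z^k(A)` is projective, and every `Z^k(A)` is a direct summand of `A^k`.

A cycle `z` of `A*` with `Index [z] = 0` vanishes on `Z^n(A)`, so it factors through
`δ^n : A^n → B^{n+1}(A)`, which has a section; this gives exactness in the middle and the left
inverse of `coIndex`. A retraction of `A^n` onto `Z^n(A)` gives the right inverse of `Index`.
`coIndex` kills the homomorphisms extending to `Z^{n+1}(A)` because these extend further to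
`A^{n+1}`.

For `S ≤ T` with `T` projective, `Hom(S, G) / Hom(T|S, G) ≅ Ext(T/S, G)` sends `f` to the class
of `f(σx + σy - σ(x + y))` for a normalized set-theoretic section `σ` of `T → T/S`. Its kernel
consists of the extendable homomorphisms, and it is onto because `T → T/S` lifts through the
extension of `T/S` by `G` built from any symmetric cocycle.
-/

/-- `(-1)^n` for `n : ℤ`. -/
def sgn (n : ℤ) : ℤ := if Even n then 1 else -1

/-- Precomposition `g ↦ g ∘ f`, as a homomorphism of dual groups. -/
def precompHom (G : Type*) [AddCommGroup G] {X Y : Type*} [AddCommGroup X] [AddCommGroup Y]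
    (f : X →+ Y) : (Y →+ G) →+ (X →+ G) where
  toFun g := g.comp f
  map_zero' := rfl
  map_add' _ _ := rfl

/-- The subgroup of `Hom(S, G)` of homomorphisms that extend to `T`. -/
def extSub {X G : Type*} [AddCommGroup X] [AddCommGroup G] (S T : AddSubgroup X) :
    AddSubgroup (↥S →+ G) where
  carrier := {f | ∃ ψ : ↥T →+ G, ∀ (x : X) (hxS : x ∈ S) (hxT : x ∈ T),
    ψ ⟨x, hxT⟩ = f ⟨x, hxS⟩}
  zero_mem' := ⟨0, fun _ _ _ => rfl⟩
  add_mem' := by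
    rintro f g ⟨ψ, hψ⟩ ⟨χ, hχ⟩
    exact ⟨ψ + χ, fun x h1 h2 => by
      simp [AddMonoidHom.add_apply, hψ x h1 h2, hχ x h1 h2]⟩
  neg_mem' := by
    rintro f ⟨ψ, hψ⟩
    exact ⟨-ψ, fun x h1 h2 => by simp [hψ x h1 h2]⟩

/-- The group of normalized symmetric 2-cocycles. -/
def cocycleSub (H G : Type*) [AddCommGroup H] [AddCommGroup G] :
    AddSubgroup (H → H → G) where
  carrier := {c | (∀ x : H, c x 0 = 0) ∧ (∀ x y : H, c x y = c y x) ∧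
    ∀ x y z : H, c x y + c (x + y) z = c x z + c (x + z) y}
  zero_mem' := ⟨fun _ => rfl, fun _ _ => rfl, fun _ _ _ => by simp⟩
  add_mem' := by
    rintro a b ⟨a1, a2, a3⟩ ⟨b1, b2, b3⟩
    refine ⟨fun x => ?_, fun x y => ?_, fun x y z => ?_⟩
    · simp [a1, b1]
    · simp [a2 x y, b2 x y]
    · show a x y + b x y + (a (x + y) z + b (x + y) z)
        = a x z + b x z + (a (x + z) y + b (x + z) y)
      calc a x y + b x y + (a (x + y) z + b (x + y) z)
          = (a x y + a (x + y) z) + (b x y + b (x + y) z) := by abel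
        _ = (a x z + a (x + z) y) + (b x z + b (x + z) y) := by rw [a3, b3]
        _ = a x z + b x z + (a (x + z) y + b (x + z) y) := by abel
  neg_mem' := by
    rintro a ⟨a1, a2, a3⟩
    refine ⟨fun x => ?_, fun x y => ?_, fun x y z => ?_⟩
    · simp [a1]
    · simp [a2 x y]
    · show -a x y + -a (x + y) z = -a x z + -a (x + z) y
      rw [← neg_add, ← neg_add, a3]

/-- The group of coboundaries. -/
def cobSub (H G : Type*) [AddCommGroup H] [AddCommGroup G] :
    AddSubgroup (H → H → G) where
  carrier := {c | ∃ h : H → G, h 0 = 0 ∧ ∀ x y : H, c x y = h x + h y - h (x + y)}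
  zero_mem' := ⟨0, rfl, by simp⟩
  add_mem' := by
    rintro a b ⟨h1, h10, hh1⟩ ⟨h2, h20, hh2⟩
    refine ⟨h1 + h2, by simp [h10, h20], fun x y => ?_⟩
    show a x y + b x y = _
    rw [hh1 x y, hh2 x y]
    simp only [Pi.add_apply]
    abel
  neg_mem' := by
    rintro a ⟨h, h0, hh⟩
    refine ⟨-h, by simp [h0], fun x y => ?_⟩
    show -a x y = _
    rw [hh x y]
    simp only [Pi.neg_apply]
    abel

/-- `Ext(H, G)` realized as normalized symmetric cocycles modulo coboundaries. -/
abbrev ExtCocycle (H G : Type*) [AddCommGroup H] [AddCommGroup G] : Type _ :=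
  ↥(cocycleSub H G) ⧸ ((cobSub H G).addSubgroupOf (cocycleSub H G))

@[simp] theorem precompHom_apply {G X Y : Type*} [AddCommGroup G] [AddCommGroup X]
    [AddCommGroup Y] (f : X →+ Y) (g : Y →+ G) : precompHom G f g = g.comp f := rfl

theorem sgn_mul_self (n : ℤ) : sgn n * sgn n = 1 := by
  unfold sgn; split_ifs <;> norm_num

open Finsupp Set Submodule.IsPrincipal

section FreeSubmodule

variable {R : Type*} [CommRing R]

theorem Finsupp.linearIndependent_of_triangular [NoZeroDivisors R] {ι : Type*}
    {v : ι → ℕ →₀ R} (e : ι → ℕ) (he : Function.Injective e)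
    (hsupp : ∀ i, v i ∈ supported R R (Iic (e i))) (hdiag : ∀ i, v i (e i) ≠ 0) :
    LinearIndependent R v := by
  classical
  rw [linearIndependent_iff']
  intro s g hsum i hi
  by_contra hgi
  obtain ⟨m, hm, hmax⟩ := (s.filter (g · ≠ 0)).exists_max_image e ⟨i, by simp [hi, hgi]⟩
  rw [Finset.mem_filter] at hm
  have hvanish : ∀ j ∈ s, j ≠ m → (g j • v j) (e m) = 0 := by
    intro j hj hjm
    by_cases hgj : g j = 0
    · simp [hgj]
    have hlt : e j < e m := lt_of_le_of_ne (hmax j (by simp [hj, hgj])) (he.ne hjm)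
    simp [(mem_supported' R _).mp (hsupp j) (e m) (by simpa using hlt)]
  have hcoeff : g m * v m (e m) = 0 := by
    have := DFunLike.congr_fun hsum (e m)
    rwa [Finset.sum_apply', Finset.sum_eq_single m hvanish (absurd hm.1)] at this
  exact (mul_eq_zero.mp hcoeff).elim hm.2 (hdiag m)

theorem Finsupp.mem_supported_Iio_of_apply_eq_zero {y : ℕ →₀ R} {N : ℕ}
    (hy : y ∈ supported R R (Iic N)) (hN : y N = 0) : y ∈ supported R R (Iio N) := by
  rw [mem_supported'] at hy ⊢
  intro j hj
  rcases eq_or_ne j N with rfl | hjN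
  · exact hN
  · exact hy j (by simp at hj ⊢; omega)

noncomputable def Submodule.leadingCoeffIdeal (P : Submodule R (ℕ →₀ R)) (k : ℕ) : Ideal R :=
  (P ⊓ supported R R (Iic k)).map (lapply k)

variable [IsPrincipalIdealRing R]

theorem Submodule.exists_mem_apply_eq_generator (P : Submodule R (ℕ →₀ R)) (k : ℕ) :
    ∃ x ∈ P ⊓ supported R R (Iic k), x k = generator (P.leadingCoeffIdeal k) := by
  simpa using Submodule.mem_map.mp (generator_mem (P.leadingCoeffIdeal k))

theorem Submodule.mem_span_of_apply_eq_generator (P : Submodule R (ℕ →₀ R))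
    (x : ℕ → ℕ →₀ R) (hx : ∀ k, x k ∈ P ⊓ supported R R (Iic k))
    (hxk : ∀ k, x k k = generator (P.leadingCoeffIdeal k)) (N : ℕ) :
    ∀ y ∈ P ⊓ supported R R (Iio N),
      y ∈ span R (x '' {k | generator (P.leadingCoeffIdeal k) ≠ 0}) := by
  induction N with
  | zero => simp
  | succ N ih =>
    intro y hy
    rw [Iio_add_one_eq_Iic] at hy
    obtain ⟨a, ha⟩ : ∃ a : R, a • generator (P.leadingCoeffIdeal N) = y N :=
      Submodule.mem_span_singleton.mp <| by
        rw [span_singleton_generator]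
        exact Submodule.mem_map_of_mem hy
    -- if the generator vanishes, `x N` is supported in `[0, N)`, and is in the span by induction
    have hxN : x N ∈ span R (x '' {k | generator (P.leadingCoeffIdeal k) ≠ 0}) := by
      by_cases h0 : generator (P.leadingCoeffIdeal N) = 0
      · exact ih _ ⟨(hx N).1, mem_supported_Iio_of_apply_eq_zero (hx N).2 ((hxk N).trans h0)⟩
      · exact subset_span ⟨N, h0, rfl⟩
    have hrest : y - a • x N ∈ P ⊓ supported R R (Iio N) :=
      ⟨P.sub_mem hy.1 (P.smul_mem a (hx N).1),
        mem_supported_Iio_of_apply_eq_zero (sub_mem hy.2 (Submodule.smul_mem _ a (hx N).2))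
          (by simp [hxk, ← ha])⟩
    simpa using add_mem (ih _ hrest) (Submodule.smul_mem _ a hxN)

variable [IsDomain R]

theorem Submodule.free_natFinsupp (P : Submodule R (ℕ →₀ R)) : Module.Free R P := by
  choose x hx hxk using P.exists_mem_apply_eq_generator
  let J := {k | generator (P.leadingCoeffIdeal k) ≠ 0}
  have hli : LinearIndependent R (fun k : J => x k) :=
    linearIndependent_of_triangular Subtype.val Subtype.val_injective (fun k => (hx k).2)
      fun k => (hxk k).trans_ne k.2
  have hspan : span R (range fun k : J => x k) = P := by
    refine le_antisymm (span_le.mpr ?_) fun y hy => ?_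
    · rintro _ ⟨k, rfl⟩
      exact (hx k).1
    · obtain ⟨N, hN⟩ := y.support.exists_nat_subset_range
      rw [← image_eq_range]
      refine P.mem_span_of_apply_eq_generator x hx hxk N y ⟨hy, ?_⟩
      exact (mem_supported R y).mpr fun j hj => by simpa using hN hj
  exact Module.Free.of_basis ((Module.Basis.span hli).map (LinearEquiv.ofEq _ _ hspan))

theorem Submodule.free_of_countable_basis {M ι : Type*} [AddCommGroup M] [Module R M]
    [Countable ι] (b : Module.Basis ι R M) (N : Submodule R M) : Module.Free R N := by
  obtain ⟨e, he⟩ := exists_injective_nat ι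
  let L : M →ₗ[R] ℕ →₀ R := lmapDomain R R e ∘ₗ b.repr.toLinearMap
  have hL : Function.Injective L := (mapDomain_injective he).comp b.repr.injective
  have := (N.map L).free_natFinsupp
  exact Module.Free.of_equiv (N.equivMapOfInjective L hL).symm

end FreeSubmodule

instance AddSubgroup.projective_of_countable_free {M : Type*} [AddCommGroup M] [Countable M]
    [Module.Free ℤ M] (S : AddSubgroup M) : Module.Projective ℤ S :=
  let b := Module.Free.chooseBasis ℤ M
  have : Countable (Module.Free.ChooseBasisIndex ℤ M) := b.injective.countable
  have : Module.Free ℤ S := (AddSubgroup.toIntSubmodule S).free_of_countable_basis b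
  Module.Projective.of_free

theorem AddMonoidHom.exists_lift_of_projective {P X Y : Type*} [AddCommGroup P]
    [AddCommGroup X] [AddCommGroup Y] [Module.Projective ℤ P] (f : X →+ Y)
    (hf : Function.Surjective f) (g : P →+ Y) : ∃ h : P →+ X, f.comp h = g := by
  obtain ⟨h, hh⟩ := Module.projective_lifting_property f.toIntLinearMap g.toIntLinearMap hf
  exact ⟨h.toAddMonoidHom, congrArg LinearMap.toAddMonoidHom hh⟩

theorem AddMonoidHom.exists_section_rangeRestrict {X Y : Type*} [AddCommGroup X]
    [AddCommGroup Y] (f : X →+ Y) [Module.Projective ℤ f.range] :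
    ∃ s : f.range →+ X, ∀ b, f (s b) = b := by
  obtain ⟨s, hs⟩ := f.rangeRestrict.exists_lift_of_projective f.rangeRestrict_surjective (.id _)
  exact ⟨s, fun b => congrArg Subtype.val (DFunLike.congr_fun hs b)⟩

theorem AddMonoidHom.exists_retraction_ker {X Y : Type*} [AddCommGroup X]
    [AddCommGroup Y] (f : X →+ Y) [Module.Projective ℤ f.range] :
    ∃ r : X →+ f.ker, ∀ a : f.ker, r a = a := by
  obtain ⟨s, hs⟩ := f.exists_section_rangeRestrict
  refine ⟨(AddMonoidHom.id X - s.comp f.rangeRestrict).codRestrict f.ker fun x => ?_, fun a => ?_⟩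
  · simp [hs]
  · ext
    simp [show f.rangeRestrict a = 0 from Subtype.ext a.2]

section Cocycles

variable {H G : Type*} [AddCommGroup H] [AddCommGroup G]

theorem cocycleSub_apply_zero_left {c : H → H → G} (hc : c ∈ cocycleSub H G) (x : H) :
    c 0 x = 0 := by
  rw [hc.2.1]; exact hc.1 x

theorem cocycleSub_add_assoc {c : H → H → G} (hc : c ∈ cocycleSub H G) (x y z : H) :
    c x y + c (x + y) z = c y z + c x (y + z) := by
  rw [hc.2.1 x y, ← hc.2.1 (y + z) x, add_comm x y, hc.2.2 y x z, add_comm y z]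

theorem AddMonoidHom.comp_mem_cocycleSub {K : Type*} [AddCommGroup K] (f : G →+ K)
    {c : H → H → G} (hc : c ∈ cocycleSub H G) : (fun x y => f (c x y)) ∈ cocycleSub H K :=
  ⟨fun x => by simp [hc.1 x], fun x y => by simp only [hc.2.1 x y],
    fun x y z => by simp only [← map_add, hc.2.2 x y z]⟩

@[ext]
structure CocycleExtension (c : cocycleSub H G) where
  fst : G
  snd : H

namespace CocycleExtension

variable {c : cocycleSub H G}

instance : Zero (CocycleExtension c) := ⟨⟨0, 0⟩⟩
instance : Add (CocycleExtension c) :=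
  ⟨fun p q => ⟨p.fst + q.fst + c.1 p.snd q.snd, p.snd + q.snd⟩⟩
instance : Neg (CocycleExtension c) := ⟨fun p => ⟨-p.fst - c.1 p.snd (-p.snd), -p.snd⟩⟩

@[simp] theorem zero_fst : (0 : CocycleExtension c).fst = 0 := rfl
@[simp] theorem zero_snd : (0 : CocycleExtension c).snd = 0 := rfl
@[simp] theorem neg_fst (p : CocycleExtension c) : (-p).fst = -p.fst - c.1 p.snd (-p.snd) := rfl
@[simp] theorem neg_snd (p : CocycleExtension c) : (-p).snd = -p.snd := rfl
@[simp] theorem add_fst (p q : CocycleExtension c) :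
    (p + q).fst = p.fst + q.fst + c.1 p.snd q.snd := rfl
@[simp] theorem add_snd (p q : CocycleExtension c) : (p + q).snd = p.snd + q.snd := rfl

instance : AddCommGroup (CocycleExtension c) where
  add_assoc p q r := CocycleExtension.ext (by
      calc _ = p.fst + q.fst + r.fst + (c.1 p.snd q.snd + c.1 (p.snd + q.snd) r.snd) := by
            simp only [add_fst, add_snd]; abel
        _ = _ := by rw [cocycleSub_add_assoc c.2]; simp only [add_fst, add_snd]; abel)
      (add_assoc ..)
  zero_add p := CocycleExtension.ext (by simp [cocycleSub_apply_zero_left c.2]) (zero_add p.snd)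
  add_zero p := CocycleExtension.ext (by simp [c.2.1]) (add_zero p.snd)
  neg_add_cancel p := CocycleExtension.ext
    (by simp only [add_fst, neg_fst, neg_snd, zero_fst, c.2.2.1 (-p.snd)]; abel)
    (neg_add_cancel p.snd)
  add_comm p q := CocycleExtension.ext (by simp [c.2.2.1 p.snd, add_comm p.fst]) (add_comm ..)
  nsmul := nsmulRec
  zsmul := zsmulRec

def sndHom : CocycleExtension c →+ H := AddMonoidHom.mk' snd fun _ _ => rfl

theorem sndHom_surjective : Function.Surjective (sndHom (c := c)) := fun x => ⟨⟨0, x⟩, rfl⟩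

theorem sub_fst_of_snd_eq {p q : CocycleExtension c} (h : p.snd = q.snd) :
    (p - q).fst = p.fst - q.fst := by
  have hw : (⟨p.fst - q.fst, 0⟩ : CocycleExtension c) + q = p :=
    CocycleExtension.ext (by simp [cocycleSub_apply_zero_left c.2]) (by simp [h])
  rw [← eq_sub_of_add_eq hw]

end CocycleExtension

end Cocycles

section ExtCocycle

variable {X G : Type*} [AddCommGroup X] [AddCommGroup G]

theorem AddSubgroup.mem_of_mk_eq_zero {S T : AddSubgroup X} {t : T}
    (h : (t : T ⧸ S.addSubgroupOf T) = 0) : (t : X) ∈ S :=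
  AddSubgroup.mem_addSubgroupOf.mp ((QuotientAddGroup.eq_zero_iff t).mp h)

variable (S T : AddSubgroup X)

noncomputable def normalizedSection (x : T ⧸ S.addSubgroupOf T) : T :=
  x.out - (0 : T ⧸ S.addSubgroupOf T).out

@[simp] theorem mk_normalizedSection (x : T ⧸ S.addSubgroupOf T) :
    (normalizedSection S T x : T ⧸ S.addSubgroupOf T) = x := by
  simp [normalizedSection]

@[simp] theorem normalizedSection_zero : normalizedSection S T 0 = 0 := sub_self _

noncomputable def sectionDefect (x y : T ⧸ S.addSubgroupOf T) : S :=
  ⟨(normalizedSection S T x + normalizedSection S T y - normalizedSection S T (x + y) : T),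
    AddSubgroup.mem_of_mk_eq_zero (by simp)⟩

noncomputable def sectionRemainder (t : T) : S :=
  ⟨(t - normalizedSection S T t : T), AddSubgroup.mem_of_mk_eq_zero (by simp)⟩

theorem sectionRemainder_add (t u : T) :
    sectionRemainder S T (t + u) =
      sectionRemainder S T t + sectionRemainder S T u + sectionDefect S T t u := by
  ext
  simp [sectionRemainder, sectionDefect]
  abel

theorem sectionDefect_mem_cocycleSub : sectionDefect S T ∈ cocycleSub _ S := by
  refine ⟨fun x => ?_, fun x y => ?_, fun x y z => ?_⟩ <;> ext <;>
    simp only [sectionDefect] <;> push_cast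
  · simp
  · rw [add_comm y x]; abel
  · rw [add_right_comm x y z]; abel

noncomputable def defectCocycle : (S →+ G) →+ cocycleSub (T ⧸ S.addSubgroupOf T) G where
  toFun f := ⟨fun x y => f (sectionDefect S T x y),
    f.comp_mem_cocycleSub (sectionDefect_mem_cocycleSub S T)⟩
  map_zero' := rfl
  map_add' _ _ := rfl

variable {S T}

theorem mem_extSub_of_defectCocycle_mem_cobSub {f : S →+ G}
    (hf : (defectCocycle S T f).1 ∈ cobSub _ G) : f ∈ extSub S T := by
  obtain ⟨h, h0, hh⟩ := hf
  let ψ : T →+ G := AddMonoidHom.mk' (fun t => f (sectionRemainder S T t) + h t) fun t u => by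
    simp only [sectionRemainder_add, map_add, QuotientAddGroup.mk_add]
    rw [show f (sectionDefect S T t u) = h t + h u - h (t + u) from hh t u]
    abel
  refine ⟨ψ, fun x hxS hxT => ?_⟩
  have hx : ((⟨x, hxT⟩ : T) : T ⧸ S.addSubgroupOf T) = 0 :=
    (QuotientAddGroup.eq_zero_iff _).mpr (AddSubgroup.mem_addSubgroupOf.mpr hxS)
  simp only [ψ, AddMonoidHom.mk'_apply, hx, h0, add_zero]
  congr
  simp [sectionRemainder, hx]

theorem defectCocycle_mem_cobSub_of_mem_extSub {f : S →+ G} (hf : f ∈ extSub S T) :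
    (defectCocycle S T f).1 ∈ cobSub _ G := by
  obtain ⟨ψ, hψ⟩ := hf
  refine ⟨fun x => ψ (normalizedSection S T x), by simp, fun x y => ?_⟩
  rw [← map_add, ← map_sub]
  exact (hψ _ (sectionDefect S T x y).2
    (normalizedSection S T x + normalizedSection S T y - normalizedSection S T (x + y)).2).symm

theorem exists_defectCocycle_sub_mem_cobSub [Module.Projective ℤ T] (hST : S ≤ T)
    (c : cocycleSub (T ⧸ S.addSubgroupOf T) G) :
    ∃ f : S →+ G, (defectCocycle S T f - c).1 ∈ cobSub _ G := by
  obtain ⟨ℓ, hℓ⟩ := (CocycleExtension.sndHom (c := c)).exists_lift_of_projective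
    CocycleExtension.sndHom_surjective (QuotientAddGroup.mk' (S.addSubgroupOf T))
  have hℓ_snd (t : T) : (ℓ t).snd = t := DFunLike.congr_fun hℓ t
  have hℓ_snd_S (s : S) : (ℓ (AddSubgroup.inclusion hST s)).snd = 0 := by
    rw [hℓ_snd, QuotientAddGroup.eq_zero_iff]
    exact AddSubgroup.mem_addSubgroupOf.mpr s.2
  -- on `S`, `ℓ` lands in `G × {0}`, where the twisted addition is the plain one
  let f : S →+ G := AddMonoidHom.mk' (fun s => (ℓ (AddSubgroup.inclusion hST s)).fst)
    fun s s' => by simp [hℓ_snd_S, c.2.1]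
  refine ⟨f, fun x => (ℓ (normalizedSection S T x)).fst, by simp, fun x y => ?_⟩
  have hsnd : (ℓ (normalizedSection S T x) + ℓ (normalizedSection S T y)).snd =
      (ℓ (normalizedSection S T (x + y))).snd := by simp [hℓ_snd]
  have hf : f (sectionDefect S T x y) = (ℓ (normalizedSection S T x) +
      ℓ (normalizedSection S T y) - ℓ (normalizedSection S T (x + y))).fst := by
    simp only [f, AddMonoidHom.mk'_apply, ← map_add, ← map_sub]
    rfl
  simp only [AddSubgroup.coe_sub, Pi.sub_apply]
  show f (sectionDefect S T x y) - c.1 x y = _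
  rw [hf, CocycleExtension.sub_fst_of_snd_eq hsnd]
  simp [hℓ_snd]
  abel

variable (S T G) in
noncomputable def defectCocycleClass : (S →+ G) →+ ExtCocycle (T ⧸ S.addSubgroupOf T) G :=
  (QuotientAddGroup.mk' _).comp (defectCocycle S T)

variable (G) in
theorem ker_defectCocycleClass : (defectCocycleClass G S T).ker = extSub S T := by
  ext f
  rw [AddMonoidHom.mem_ker, defectCocycleClass, AddMonoidHom.comp_apply,
    QuotientAddGroup.mk'_apply, QuotientAddGroup.eq_zero_iff, AddSubgroup.mem_addSubgroupOf]
  exact ⟨mem_extSub_of_defectCocycle_mem_cobSub, defectCocycle_mem_cobSub_of_mem_extSub⟩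

theorem defectCocycleClass_surjective [Module.Projective ℤ T] (hST : S ≤ T) :
    Function.Surjective (defectCocycleClass G S T) := by
  intro c
  induction c using QuotientAddGroup.induction_on with
  | H c =>
    obtain ⟨f, hf⟩ := exists_defectCocycle_sub_mem_cobSub hST c
    exact ⟨f, QuotientAddGroup.eq_iff_sub_mem.mpr (AddSubgroup.mem_addSubgroupOf.mpr hf)⟩

noncomputable def extSubQuotientEquiv [Module.Projective ℤ T] (hST : S ≤ T) :
    ((S →+ G) ⧸ extSub S T) ≃+ ExtCocycle (T ⧸ S.addSubgroupOf T) G :=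
  (QuotientAddGroup.quotientAddEquivOfEq (ker_defectCocycleClass G).symm).trans
    (QuotientAddGroup.quotientKerEquivOfSurjective _ (defectCocycleClass_surjective hST))

end ExtCocycle

section DualComplex

-- `d₀, d₁, d₂` stand for `δ^{n-1}, δ^n, δ^{n+1}`, so that `DualHomology G d₀ d₁` is `H_n(A*)`
-- and `Cohomology d₀ d₁` is `H^n(A)`.
variable (G : Type*) [AddCommGroup G] {A₀ A₁ A₂ A₃ : Type*} [AddCommGroup A₀] [AddCommGroup A₁]
  [AddCommGroup A₂] [AddCommGroup A₃] (d₀ : A₀ →+ A₁) (d₁ : A₁ →+ A₂) (d₂ : A₂ →+ A₃)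

abbrev DualHomology : Type _ :=
  ↥(precompHom G d₀).ker ⧸ ((precompHom G d₁).range.addSubgroupOf (precompHom G d₀).ker)

abbrev Cohomology : Type _ := ↥d₁.ker ⧸ (d₀.range.addSubgroupOf d₁.ker)

def cycleEval : (precompHom G d₀).ker →+ (Cohomology d₀ d₁ →+ G) where
  toFun z := QuotientAddGroup.lift _ (z.1.comp d₁.ker.subtype) fun a ha => by
    obtain ⟨x, hx⟩ := AddSubgroup.mem_addSubgroupOf.mp ha
    rw [AddMonoidHom.mem_ker, AddMonoidHom.comp_apply, AddSubgroup.coe_subtype, ← hx]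
    exact DFunLike.congr_fun z.2 x
  map_zero' := by ext; rfl
  map_add' _ _ := by ext; rfl

def index : DualHomology G d₀ d₁ →+ (Cohomology d₀ d₁ →+ G) :=
  QuotientAddGroup.lift _ (cycleEval G d₀ d₁) fun z hz => by
    obtain ⟨w, hw⟩ := AddSubgroup.mem_addSubgroupOf.mp hz
    ext a
    change z.1 a = 0
    rw [← hw, precompHom_apply, AddMonoidHom.comp_apply, AddMonoidHom.mem_ker.mp a.2, map_zero]

@[simp] theorem index_mk_mk (z : (precompHom G d₀).ker) (a : d₁.ker) :
    index G d₀ d₁ z a = z.1 a := rfl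

variable {G d₀ d₁ d₂} (ε : ℤ)

def coIndexCycle (h₁₀ : ∀ x, d₁ (d₀ x) = 0) : (d₁.range →+ G) →+ (precompHom G d₀).ker where
  toFun f := ⟨ε • f.comp d₁.rangeRestrict, by
    ext x
    simp [show d₁.rangeRestrict (d₀ x) = 0 from Subtype.ext (h₁₀ x)]⟩
  map_zero' := by ext; simp
  map_add' _ _ := by ext; simp

theorem coIndexCycle_mem_boundaries (h₁₀ : ∀ x, d₁ (d₀ x) = 0) (h₂₁ : ∀ x, d₂ (d₁ x) = 0)
    [Module.Projective ℤ d₂.range] {f : d₁.range →+ G} (hf : f ∈ extSub d₁.range d₂.ker) :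
    coIndexCycle ε h₁₀ f ∈ (precompHom G d₁).range.addSubgroupOf (precompHom G d₀).ker := by
  obtain ⟨ψ, hψ⟩ := hf
  obtain ⟨r, hr⟩ := d₂.exists_retraction_ker
  refine AddSubgroup.mem_addSubgroupOf.mpr ⟨ε • ψ.comp r, ?_⟩
  ext a
  have hψa := hψ (d₁ a) ⟨a, rfl⟩ (h₂₁ a)
  simp [coIndexCycle, hr ⟨d₁ a, h₂₁ a⟩, hψa]
  rfl

variable (G d₂) in
def coIndex (h₁₀ : ∀ x, d₁ (d₀ x) = 0) (h₂₁ : ∀ x, d₂ (d₁ x) = 0)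
    [Module.Projective ℤ d₂.range] :
    ((d₁.range →+ G) ⧸ extSub d₁.range d₂.ker) →+ DualHomology G d₀ d₁ :=
  QuotientAddGroup.lift _ ((QuotientAddGroup.mk' _).comp (coIndexCycle ε h₁₀)) fun _ hf =>
    (QuotientAddGroup.eq_zero_iff _).mpr (coIndexCycle_mem_boundaries ε h₁₀ h₂₁ hf)

@[simp] theorem coe_coIndexCycle (h₁₀ : ∀ x, d₁ (d₀ x) = 0) (f : d₁.range →+ G) :
    (coIndexCycle ε h₁₀ f : A₁ →+ G) = ε • f.comp d₁.rangeRestrict := rfl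

theorem exists_index_mk_comp_retraction (h₁₀ : ∀ x, d₁ (d₀ x) = 0) (r : A₁ →+ d₁.ker)
    (hr : ∀ a : d₁.ker, r a = a) (φ : Cohomology d₀ d₁ →+ G) :
    ∃ hmem : φ.comp ((QuotientAddGroup.mk' (d₀.range.addSubgroupOf d₁.ker)).comp r) ∈
        (precompHom G d₀).ker,
      index G d₀ d₁ (QuotientAddGroup.mk ⟨_, hmem⟩) = φ := by
  refine ⟨?_, ?_⟩
  · ext x
    have hrx : r (d₀ x) = ⟨d₀ x, h₁₀ x⟩ := hr ⟨d₀ x, h₁₀ x⟩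
    have hzero : ((⟨d₀ x, h₁₀ x⟩ : d₁.ker) : Cohomology d₀ d₁) = 0 :=
      (QuotientAddGroup.eq_zero_iff _).mpr (AddSubgroup.mem_addSubgroupOf.mpr ⟨x, rfl⟩)
    simp [hrx, hzero]
  · ext a
    simp [hr]

theorem index_surjective (h₁₀ : ∀ x, d₁ (d₀ x) = 0) [Module.Projective ℤ d₁.range] :
    Function.Surjective (index G d₀ d₁) := fun φ =>
  let ⟨r, hr⟩ := d₁.exists_retraction_ker
  let ⟨_, hφ⟩ := exists_index_mk_comp_retraction h₁₀ r hr φ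
  ⟨_, hφ⟩

variable (h₁₀ : ∀ x, d₁ (d₀ x) = 0) (h₂₁ : ∀ x, d₂ (d₁ x) = 0) [Module.Projective ℤ d₂.range]

@[simp] theorem coIndex_mk (f : d₁.range →+ G) :
    coIndex G d₂ ε h₁₀ h₂₁ f = (coIndexCycle ε h₁₀ f : DualHomology G d₀ d₁) := rfl

theorem coIndex_injective (hε : ε * ε = 1) : Function.Injective (coIndex G d₂ ε h₁₀ h₂₁) := by
  rw [injective_iff_map_eq_zero]
  intro q hq
  induction q using QuotientAddGroup.induction_on with
  | H f =>
    obtain ⟨w, hw⟩ := AddSubgroup.mem_addSubgroupOf.mp ((QuotientAddGroup.eq_zero_iff _).mp hq)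
    refine (QuotientAddGroup.eq_zero_iff f).mpr ⟨ε • w.comp d₂.ker.subtype, ?_⟩
    rintro _ ⟨y, rfl⟩ hxT
    have hwy : w (d₁ y) = ε • f (d₁.rangeRestrict y) := DFunLike.congr_fun hw y
    simp [hwy, smul_smul, hε]
    rfl

theorem index_coIndex (q) : index G d₀ d₁ (coIndex G d₂ ε h₁₀ h₂₁ q) = 0 := by
  induction q using QuotientAddGroup.induction_on with
  | H f =>
    ext a
    simp [show d₁.rangeRestrict a = 0 from Subtype.ext a.2]

theorem index_eq_zero_iff [Module.Projective ℤ d₁.range] (hε : ε * ε = 1) (x) :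
    index G d₀ d₁ x = 0 ↔ ∃ q, coIndex G d₂ ε h₁₀ h₂₁ q = x := by
  refine ⟨fun hx => ?_, fun ⟨q, hq⟩ => hq ▸ index_coIndex ε h₁₀ h₂₁ q⟩
  induction x using QuotientAddGroup.induction_on with
  | H z =>
    have hz (a : d₁.ker) : z.1 a = 0 := DFunLike.congr_fun hx (a : Cohomology d₀ d₁)
    obtain ⟨s, hs⟩ := d₁.exists_section_rangeRestrict
    refine ⟨QuotientAddGroup.mk (ε • z.1.comp s), congrArg QuotientAddGroup.mk (Subtype.ext ?_)⟩
    ext a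
    have hsa : z.1 (s (d₁.rangeRestrict a)) = z.1 a := by
      have hker : a - s (d₁.rangeRestrict a) ∈ d₁.ker := by simp [hs]
      exact (sub_eq_zero.mp (by simpa using hz ⟨_, hker⟩)).symm
    simp [coIndexCycle, smul_smul, hε, hsa]

variable (G d₂) in
def coIndexLeftInverse (s : d₁.range →+ A₁) (hs : ∀ b, d₁ (s b) = b) :
    DualHomology G d₀ d₁ →+ ((d₁.range →+ G) ⧸ extSub d₁.range d₂.ker) :=
  QuotientAddGroup.lift _ ((QuotientAddGroup.mk' _).comp
      (ε • (precompHom G s).comp (precompHom G d₀).ker.subtype)) fun z hz => by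
    obtain ⟨w, hw⟩ := AddSubgroup.mem_addSubgroupOf.mp hz
    refine (QuotientAddGroup.eq_zero_iff _).mpr ⟨ε • w.comp d₂.ker.subtype, fun _ _ _ => ?_⟩
    simp [← hw, hs]

theorem coIndexLeftInverse_coIndex (hε : ε * ε = 1) (s : d₁.range →+ A₁)
    (hs : ∀ b, d₁ (s b) = b) (q) :
    coIndexLeftInverse G d₂ ε s hs (coIndex G d₂ ε h₁₀ h₂₁ q) = q := by
  induction q using QuotientAddGroup.induction_on with
  | H f =>
    refine congrArg QuotientAddGroup.mk ?_
    ext b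
    simp [smul_smul, hε, show d₁.rangeRestrict (s b) = b from Subtype.ext (hs b)]

end DualComplex

theorem algebraic_universal_coefficient_theorem_general
    {G : Type*} [AddCommGroup G] [TopologicalSpace G] [IsTopologicalAddGroup G]
    (A : ℤ → Type*) [∀ n, AddCommGroup (A n)] [∀ n, Countable (A n)]
    [∀ n, Module.Free ℤ (A n)]
    (δ : ∀ n : ℤ, A n →+ A (n + 1))
    (hδδ : ∀ (n : ℤ) (x : A n), δ (n + 1) (δ n x) = 0) :
    ∀ n : ℤ,
      ∃ (coIndex :
          ((↥(δ (n + 1)).range →+ G) ⧸ extSub (δ (n + 1)).range (δ (n + 1 + 1)).ker) →+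
          (↥(precompHom G (δ n)).ker ⧸
            ((precompHom G (δ (n + 1))).range.addSubgroupOf (precompHom G (δ n)).ker)))
        (Index :
          (↥(precompHom G (δ n)).ker ⧸
            ((precompHom G (δ (n + 1))).range.addSubgroupOf (precompHom G (δ n)).ker)) →+
          ((↥(δ (n + 1)).ker ⧸ ((δ n).range.addSubgroupOf (δ (n + 1)).ker)) →+ G)),
        -- the defining rule of coIndex: coIndex([f]) = [(−1)^n (f ∘ δ^n)]
        (∀ f : ↥(δ (n + 1)).range →+ G,
          ∃ hmem : sgn (n + 1) • f.comp (δ (n + 1)).rangeRestrict ∈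
              (precompHom G (δ n)).ker,
            coIndex (QuotientAddGroup.mk f) =
              QuotientAddGroup.mk
                (⟨sgn (n + 1) • f.comp (δ (n + 1)).rangeRestrict, hmem⟩ :
                  ↥(precompHom G (δ n)).ker)) ∧
        -- the defining rule of Index: Index([z])([a]) = z(a)
        (∀ (z : ↥(precompHom G (δ n)).ker) (a : ↥(δ (n + 1)).ker),
          Index (QuotientAddGroup.mk z) (QuotientAddGroup.mk a) = z.1 a.1) ∧
        -- exactness: coIndex is injective, ker Index = range coIndex, Index surjective
        Function.Injective coIndex ∧
        (∀ x, Index x = 0 ↔ ∃ q, coIndex q = x) ∧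
        Function.Surjective Index ∧
        -- the first group is isomorphic to Ext(H^{n+1}(A), G), realized as cocycles
        -- modulo coboundaries
        Nonempty
          ((((↥(δ (n + 1)).range →+ G) ⧸ extSub (δ (n + 1)).range (δ (n + 1 + 1)).ker)) ≃+
            ExtCocycle
              (↥(δ (n + 1 + 1)).ker ⧸ ((δ (n + 1)).range.addSubgroupOf (δ (n + 1 + 1)).ker))
              G) ∧
        -- the sequence splits: a right inverse of Index induced by the continuous map
        -- φ ↦ φ ∘ p^n ∘ i†, for any group-theoretic retraction i† of Z^{n+1}(A) ↪ A^{n+1}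
        (∀ r : A (n + 1) →+ ↥(δ (n + 1)).ker, (∀ a : ↥(δ (n + 1)).ker, r ↑a = a) →
          Continuous (fun (φ : (↥(δ (n + 1)).ker ⧸
                ((δ n).range.addSubgroupOf (δ (n + 1)).ker)) → G) (a : A (n + 1)) =>
              φ (QuotientAddGroup.mk (r a))) ∧
          ∀ φ : (↥(δ (n + 1)).ker ⧸ ((δ n).range.addSubgroupOf (δ (n + 1)).ker)) →+ G,
            ∃ hmem : φ.comp ((QuotientAddGroup.mk'
                ((δ n).range.addSubgroupOf (δ (n + 1)).ker)).comp r) ∈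
                (precompHom G (δ n)).ker,
              Index (QuotientAddGroup.mk
                (⟨φ.comp ((QuotientAddGroup.mk'
                    ((δ n).range.addSubgroupOf (δ (n + 1)).ker)).comp r), hmem⟩ :
                  ↥(precompHom G (δ n)).ker)) = φ) ∧
        -- and a left inverse of coIndex induced by the continuous map z ↦ (−1)^n (z∘δ†),
        -- for any group-theoretic section δ† of δ^n : A^n → B^{n+1}(A)
        (∀ s : ↥(δ (n + 1)).range →+ A (n + 1),
          (∀ b : ↥(δ (n + 1)).range, δ (n + 1) (s b) = ↑b) →
          Continuous (fun (z : A (n + 1) → G) (b : ↥(δ (n + 1)).range) =>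
            sgn (n + 1) • z (s b)) ∧
          ∃ L : (↥(precompHom G (δ n)).ker ⧸
              ((precompHom G (δ (n + 1))).range.addSubgroupOf (precompHom G (δ n)).ker)) →+
              ((↥(δ (n + 1)).range →+ G) ⧸ extSub (δ (n + 1)).range (δ (n + 1 + 1)).ker),
            (∀ z : ↥(precompHom G (δ n)).ker,
              L (QuotientAddGroup.mk z) = QuotientAddGroup.mk (sgn (n + 1) • z.1.comp s)) ∧
            ∀ q, L (coIndex q) = q) := by
  intro n
  have hsgn := sgn_mul_self (n + 1)
  have hBZ : (δ (n + 1)).range ≤ (δ (n + 1 + 1)).ker := by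
    rintro _ ⟨y, rfl⟩
    exact hδδ (n + 1) y
  refine ⟨coIndex G _ (sgn (n + 1)) (hδδ n) (hδδ (n + 1)), index G (δ n) (δ (n + 1)),
    fun _ => ⟨_, rfl⟩, fun _ _ => rfl, coIndex_injective _ _ _ hsgn,
    index_eq_zero_iff _ _ _ hsgn, index_surjective (hδδ n), ⟨extSubQuotientEquiv hBZ⟩,
    fun r hr => ⟨continuous_pi fun a => continuous_apply _,
      exists_index_mk_comp_retraction (hδδ n) r hr⟩,
    fun s hs => ⟨continuous_pi fun b => (continuous_apply (s b)).zsmul _,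
      coIndexLeftInverse G _ _ s hs, fun _ => rfl, coIndexLeftInverse_coIndex _ _ _ hsgn s hs⟩⟩

theorem algebraic_universal_coefficient_theorem
    {G : Type*} [AddCommGroup G] [TopologicalSpace G] [IsTopologicalAddGroup G]
    [PolishSpace G]
    (hdcp : ∀ k : ℕ, 0 < k → IsClosed {g : G | ∃ x : G, k • x = g})
    (A : ℤ → Type*) [∀ n, AddCommGroup (A n)] [∀ n, Countable (A n)]
    [∀ n, Module.Free ℤ (A n)]
    (δ : ∀ n : ℤ, A n →+ A (n + 1))
    (hδδ : ∀ (n : ℤ) (x : A n), δ (n + 1) (δ n x) = 0) :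
    ∀ n : ℤ,
      ∃ (coIndex :
          ((↥(δ (n + 1)).range →+ G) ⧸ extSub (δ (n + 1)).range (δ (n + 1 + 1)).ker) →+
          (↥(precompHom G (δ n)).ker ⧸
            ((precompHom G (δ (n + 1))).range.addSubgroupOf (precompHom G (δ n)).ker)))
        (Index :
          (↥(precompHom G (δ n)).ker ⧸
            ((precompHom G (δ (n + 1))).range.addSubgroupOf (precompHom G (δ n)).ker)) →+
          ((↥(δ (n + 1)).ker ⧸ ((δ n).range.addSubgroupOf (δ (n + 1)).ker)) →+ G)),
        -- the defining rule of coIndex: coIndex([f]) = [(−1)^n (f ∘ δ^n)]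
        (∀ f : ↥(δ (n + 1)).range →+ G,
          ∃ hmem : sgn (n + 1) • f.comp (δ (n + 1)).rangeRestrict ∈
              (precompHom G (δ n)).ker,
            coIndex (QuotientAddGroup.mk f) =
              QuotientAddGroup.mk
                (⟨sgn (n + 1) • f.comp (δ (n + 1)).rangeRestrict, hmem⟩ :
                  ↥(precompHom G (δ n)).ker)) ∧
        -- the defining rule of Index: Index([z])([a]) = z(a)
        (∀ (z : ↥(precompHom G (δ n)).ker) (a : ↥(δ (n + 1)).ker),
          Index (QuotientAddGroup.mk z) (QuotientAddGroup.mk a) = z.1 a.1) ∧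
        -- exactness: coIndex is injective, ker Index = range coIndex, Index surjective
        Function.Injective coIndex ∧
        (∀ x, Index x = 0 ↔ ∃ q, coIndex q = x) ∧
        Function.Surjective Index ∧
        -- the first group is isomorphic to Ext(H^{n+1}(A), G), realized as cocycles
        -- modulo coboundaries
        Nonempty
          ((((↥(δ (n + 1)).range →+ G) ⧸ extSub (δ (n + 1)).range (δ (n + 1 + 1)).ker)) ≃+
            ExtCocycle
              (↥(δ (n + 1 + 1)).ker ⧸ ((δ (n + 1)).range.addSubgroupOf (δ (n + 1 + 1)).ker))
              G) ∧
        -- the sequence splits: a right inverse of Index induced by the continuous map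
        -- φ ↦ φ ∘ p^n ∘ i†, for any group-theoretic retraction i† of Z^{n+1}(A) ↪ A^{n+1}
        (∀ r : A (n + 1) →+ ↥(δ (n + 1)).ker, (∀ a : ↥(δ (n + 1)).ker, r ↑a = a) →
          Continuous (fun (φ : (↥(δ (n + 1)).ker ⧸
                ((δ n).range.addSubgroupOf (δ (n + 1)).ker)) → G) (a : A (n + 1)) =>
              φ (QuotientAddGroup.mk (r a))) ∧
          ∀ φ : (↥(δ (n + 1)).ker ⧸ ((δ n).range.addSubgroupOf (δ (n + 1)).ker)) →+ G,
            ∃ hmem : φ.comp ((QuotientAddGroup.mk'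
                ((δ n).range.addSubgroupOf (δ (n + 1)).ker)).comp r) ∈
                (precompHom G (δ n)).ker,
              Index (QuotientAddGroup.mk
                (⟨φ.comp ((QuotientAddGroup.mk'
                    ((δ n).range.addSubgroupOf (δ (n + 1)).ker)).comp r), hmem⟩ :
                  ↥(precompHom G (δ n)).ker)) = φ) ∧
        -- and a left inverse of coIndex induced by the continuous map z ↦ (−1)^n (z∘δ†),
        -- for any group-theoretic section δ† of δ^n : A^n → B^{n+1}(A)
        (∀ s : ↥(δ (n + 1)).range →+ A (n + 1),
          (∀ b : ↥(δ (n + 1)).range, δ (n + 1) (s b) = ↑b) →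
          Continuous (fun (z : A (n + 1) → G) (b : ↥(δ (n + 1)).range) =>
            sgn (n + 1) • z (s b)) ∧
          ∃ L : (↥(precompHom G (δ n)).ker ⧸
              ((precompHom G (δ (n + 1))).range.addSubgroupOf (precompHom G (δ n)).ker)) →+
              ((↥(δ (n + 1)).range →+ G) ⧸ extSub (δ (n + 1)).range (δ (n + 1 + 1)).ker),
            (∀ z : ↥(precompHom G (δ n)).ker,
              L (QuotientAddGroup.mk z) = QuotientAddGroup.mk (sgn (n + 1) • z.1.comp s)) ∧
            ∀ q, L (coIndex q) = q) :=
  algebraic_universal_coefficient_theorem_general A δ hδδ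
end
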